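/- arXiv:2009.11946 — 6 statements merged into one kernel-verified Lean document; each statement's English description precedes it below -/
import Mathlib

section
/- Let A be a finite alphabet and (τ_n)_{n≥0} a directive sequence of non-erasing substitutions on A. Let n, k ∈ ℕ with k ≥ 1 and set P := M_{[n+1,n+k]}. If every entry of P is strictly positive, then for all a, a' ∈ A one has (|w_{n+k}(a)| : ℝ) / |w_{n+k}(a')| ≤ max over i, j, j' ∈ A of P[i,j] / P[i,j']. -/
open MeasureTheory

variable {A : Type*}

/-- Apply a substitution to a word by concatenation. -/
def applyWord (σ : A → List A) (u : List A) : List A := u.flatMap σ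

/-- Composition of substitutions: first apply `τ₂`, then the extension of `τ₁`. -/
def substComp (τ₁ τ₂ : A → List A) : A → List A := fun a => applyWord τ₁ (τ₂ a)

/-- `substInterval τ m n` is `τ_{[m,n]} = τ_m ∘ τ_{m+1} ∘ ⋯ ∘ τ_n` (the identity if `m > n`). -/
def substInterval (τ : ℕ → A → List A) (m n : ℕ) : A → List A :=
  ((List.range (n + 1 - m)).map fun i => τ (m + i)).foldr substComp fun a => [a]

/-- `wseq τ n a = w_n(a) = τ_{[0,n]}(a)`. -/
def wseq (τ : ℕ → A → List A) (n : ℕ) : A → List A := substInterval τ 0 n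

/-- The substitution matrix: `M_σ[a,b]` is the number of occurrences of `a` in `σ b`. -/
def substMatrix [DecidableEq A] (σ : A → List A) : Matrix A A ℕ :=
  Matrix.of fun a b => (σ b).count a

/-- `M_{[m,n]} = M_{τ_m} ⋯ M_{τ_n}`. -/
def matInterval [Fintype A] [DecidableEq A] (τ : ℕ → A → List A) (m n : ℕ) :
    Matrix A A ℕ :=
  ((List.range (n + 1 - m)).map fun i => substMatrix (τ (m + i))).prod

/-- The language of a directive sequence: factors of the words `w_n(a)`. -/
def SadicLang (τ : ℕ → A → List A) : Set (List A) :=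
  {u | ∃ (n : ℕ) (a : A), u <:+: wseq τ n a}

/-- A finite word occurs as a factor of a two-sided sequence. -/
def FactorOf (u : List A) (x : ℤ → A) : Prop :=
  ∃ k : ℤ, u = (List.range u.length).map fun i => x (k + (i : ℤ))

/-- The S-adic subshift generated by a directive sequence. -/
def SadicShift (τ : ℕ → A → List A) : Set (ℤ → A) :=
  {x | ∀ u : List A, FactorOf u x → u ∈ SadicLang τ}

/-- The shift map on `A^ℤ`. -/
def shift (x : ℤ → A) : ℤ → A := fun n => x (n + 1)

/-- The cylinder set `{x : x₁ x₂ ⋯ x_{|w|} = w}`. -/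
def cylSet (w : List A) : Set (ℤ → A) :=
  {x | (List.range w.length).map (fun i => x (1 + (i : ℤ))) = w}

/-- `a` precedes `b` at level `n`: `ab` is a factor of `τ_{[n+1,n+m]}(c)` for some `m ≥ 1`, `c`. -/
def Precedes (τ : ℕ → A → List A) (n : ℕ) (a b : A) : Prop :=
  ∃ m : ℕ, 1 ≤ m ∧ ∃ c : A, [a, b] <:+: substInterval τ (n + 1) (n + m) c

/-- `τ_{[n+1,n+ℓ]}` is a word builder at level `n`. -/
def WordBuilder (τ : ℕ → A → List A) (n ℓ : ℕ) : Prop :=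
  ∀ a b : A, Precedes τ n a b →
    ∃ c : A, [a, b] <:+: substInterval τ (n + 1) (n + ℓ) c

section Aux
variable {A : Type*}

lemma applyWord_comp (σ ρ : A → List A) (u : List A) :
    applyWord σ (applyWord ρ u) = applyWord (substComp σ ρ) u := by
  simp only [applyWord, substComp, List.flatMap_assoc]
  rfl

lemma substComp_assoc (a b c : A → List A) :
    substComp (substComp a b) c = substComp a (substComp b c) := by
  funext x
  simp [substComp, applyWord_comp]

lemma foldr_substComp_eq (l : List (A → List A)) (x : A → List A) :
    l.foldr substComp x = substComp (l.foldr substComp fun a => [a]) x := by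
  induction l with
  | nil => funext b; simp [substComp, applyWord]
  | cons σ l ih => simp [List.foldr_cons, ih, substComp_assoc]

lemma substInterval_split (τ : ℕ → A → List A) (n k : ℕ) :
    substInterval τ 0 (n + k) = substComp (substInterval τ 0 n) (substInterval τ (n + 1) (n + k)) := by
  unfold substInterval
  have h1 : n + k + 1 - 0 = (n + 1) + k := by omega
  have h2 : n + 1 - 0 = n + 1 := by omega
  have h3 : n + k + 1 - (n + 1) = k := by omega
  rw [h1, h2, h3, List.range_add, List.map_append, List.foldr_append,
    foldr_substComp_eq]
  simp [List.map_map, Function.comp_def]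


variable [Fintype A] [DecidableEq A]

lemma count_applyWord (σ : A → List A) (u : List A) (a : A) :
    (applyWord σ u).count a = ∑ b, (σ b).count a * u.count b := by
  induction u with
  | nil => simp [applyWord]
  | cons c u ih =>
    have h1 : applyWord σ (c :: u) = σ c ++ applyWord σ u := by simp [applyWord]
    have h2 : ∀ b : A, (c :: u).count b = u.count b + if c = b then 1 else 0 := by
      intro b; rw [List.count_cons]; simp
    rw [h1, List.count_append, ih]
    simp only [h2, mul_add, mul_ite, mul_one, mul_zero, Finset.sum_add_distrib]
    rw [Finset.sum_ite_eq Finset.univ c (fun b => (σ b).count a)]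
    simp [add_comm]

lemma length_applyWord (σ : A → List A) (u : List A) :
    (applyWord σ u).length = ∑ b, u.count b * (σ b).length := by
  induction u with
  | nil => simp [applyWord]
  | cons c u ih =>
    have h1 : applyWord σ (c :: u) = σ c ++ applyWord σ u := by simp [applyWord]
    have h2 : ∀ b : A, (c :: u).count b = u.count b + if c = b then 1 else 0 := by
      intro b; rw [List.count_cons]; simp
    rw [h1, List.length_append, ih]
    simp only [h2, add_mul, ite_mul, one_mul, zero_mul, Finset.sum_add_distrib]
    rw [Finset.sum_ite_eq Finset.univ c (fun b => (σ b).length)]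
    simp [add_comm]

lemma count_foldr (l : List (A → List A)) (a b : A) :
    ((l.foldr substComp fun x => [x]) b).count a = ((l.map substMatrix).prod) a b := by
  induction l generalizing a with
  | nil =>
    simp [Matrix.one_apply, List.count_singleton]
    split <;> simp_all [beq_iff_eq, eq_comm]
  | cons σ l ih =>
    simp only [List.foldr_cons, List.map_cons, List.prod_cons, substComp]
    rw [count_applyWord, Matrix.mul_apply]
    exact Finset.sum_congr rfl fun c _ => by rw [ih c]; rfl

lemma count_substInterval (τ : ℕ → A → List A) (m n : ℕ) (a b : A) :
    (substInterval τ m n b).count a = matInterval τ m n a b := by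
  unfold substInterval matInterval
  rw [count_foldr]
  congr 1
  simp [List.map_map, Function.comp_def]

omit [Fintype A] [DecidableEq A] in
lemma substInterval_ne_nil (τ : ℕ → A → List A) (hne : ∀ n a, τ n a ≠ []) (m n : ℕ) (b : A) :
    substInterval τ m n b ≠ [] := by
  unfold substInterval
  generalize List.range (n + 1 - m) = L
  induction L generalizing b with
  | nil => simp
  | cons i L ih =>
    simp only [List.map_cons, List.foldr_cons, substComp, applyWord]
    intro h
    rcases List.exists_mem_of_ne_nil _ (ih b) with ⟨x, hx⟩
    have := List.flatMap_eq_nil_iff.mp h x hx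
    exact hne _ x this

end Aux

/-- length-ratio bound from positivity of `M_{[n+1,n+k]}`. -/
theorem stmt3 [Fintype A] [DecidableEq A] [Nonempty A]
    (τ : ℕ → A → List A) (hne : ∀ n a, τ n a ≠ []) (n k : ℕ) (hk : 1 ≤ k)
    (hpos : ∀ i j, 0 < matInterval τ (n + 1) (n + k) i j) (a a' : A) :
    ((wseq τ (n + k) a).length : ℝ) / ((wseq τ (n + k) a').length : ℝ) ≤
      Finset.univ.sup' Finset.univ_nonempty (fun p : A × A × A =>
        (matInterval τ (n + 1) (n + k) p.1 p.2.1 : ℝ) /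
          (matInterval τ (n + 1) (n + k) p.1 p.2.2 : ℝ)) := by
  set P := matInterval τ (n + 1) (n + k) with hP
  set S := Finset.univ.sup' Finset.univ_nonempty (fun p : A × A × A =>
        (P p.1 p.2.1 : ℝ) / (P p.1 p.2.2 : ℝ)) with hS
  have hlen : ∀ b : A,
      ((wseq τ (n + k) b).length : ℝ) = ∑ i, (P i b : ℝ) * ((wseq τ n i).length : ℝ) := by
    intro b
    have h0 : wseq τ (n + k) b = applyWord (wseq τ n) (substInterval τ (n + 1) (n + k) b) := by
      show substInterval τ 0 (n + k) b = _
      rw [substInterval_split τ n k]; rfl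
    have h1 : (wseq τ (n + k) b).length = ∑ i, P i b * (wseq τ n i).length := by
      rw [h0, length_applyWord]
      exact Finset.sum_congr rfl fun i _ => by rw [count_substInterval]
    rw [h1]; push_cast; rfl
  have hL : ∀ i : A, (0 : ℝ) < ((wseq τ n i).length : ℝ) := fun i => by
    exact_mod_cast List.length_pos_iff.mpr (substInterval_ne_nil τ hne 0 n i)
  have key : ∀ i ∈ Finset.univ, (P i a : ℝ) * ((wseq τ n i).length : ℝ) ≤
      S * ((P i a' : ℝ) * ((wseq τ n i).length : ℝ)) := by
    intro i _
    have hp' : (0 : ℝ) < (P i a' : ℝ) := by exact_mod_cast hpos i a'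
    have hle : (P i a : ℝ) / (P i a' : ℝ) ≤ S :=
      Finset.le_sup' (fun p : A × A × A => (P p.1 p.2.1 : ℝ) / (P p.1 p.2.2 : ℝ))
        (Finset.mem_univ (i, a, a'))
    have h2 : (P i a : ℝ) ≤ S * (P i a' : ℝ) := (div_le_iff₀ hp').mp hle
    calc (P i a : ℝ) * ((wseq τ n i).length : ℝ)
        ≤ (S * (P i a' : ℝ)) * ((wseq τ n i).length : ℝ) :=
          mul_le_mul_of_nonneg_right h2 (le_of_lt (hL i))
      _ = S * ((P i a' : ℝ) * ((wseq τ n i).length : ℝ)) := by ring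
  have hden : (0 : ℝ) < ∑ i, (P i a' : ℝ) * ((wseq τ n i).length : ℝ) :=
    Finset.sum_pos (fun i _ => mul_pos (by exact_mod_cast hpos i a') (hL i))
      Finset.univ_nonempty
  rw [hlen a, hlen a', div_le_iff₀ hden]
  calc (∑ i, (P i a : ℝ) * ((wseq τ n i).length : ℝ))
      ≤ ∑ i, S * ((P i a' : ℝ) * ((wseq τ n i).length : ℝ)) := Finset.sum_le_sum key
    _ = S * ∑ i, (P i a' : ℝ) * ((wseq τ n i).length : ℝ) := by rw [Finset.mul_sum]
end

section
/- Let γ₁, γ₂ be the Cassaigne–Selmer substitutions on {1,2,3} and let τ' := γ₁ ∘ γ₁ ∘ γ₂ ∘ γ₁ ∘ γ₂ ∘ γ₂ ∘ γ₂ ∘ γ₁. Then τ'(1) = 1213113, and for any directive sequence (τ_n)_{n≥0} with each τ_n ∈ {γ₁, γ₂} and any n with τ_{n+1}⋯τ_{n+8} = γ₁, γ₁, γ₂, γ₁, γ₂, γ₂, γ₂, γ₁ (so that τ_{[n+1,n+8]} = τ'), the composition τ_{[n+1,n+8]} is a word builder at level n: whenever a precedes b at level n, the word ab is a factor of τ'(c)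 for some c ∈ {1,2,3} (indeed of τ'(1)). -/
open MeasureTheory

variable {A : Type*}

/-- The Cassaigne–Selmer substitution `γ₁ : 1↦1, 2↦13, 3↦2` (letters `1,2,3` as `0,1,2`). -/
def csGamma₁ : Fin 3 → List (Fin 3)
  | 0 => [0]
  | 1 => [0, 2]
  | 2 => [1]

/-- The Cassaigne–Selmer substitution `γ₂ : 1↦2, 2↦13, 3↦3`. -/
def csGamma₂ : Fin 3 → List (Fin 3)
  | 0 => [1]
  | 1 => [0, 2]
  | 2 => [2]

/-- `τ' = γ₁ ∘ γ₁ ∘ γ₂ ∘ γ₁ ∘ γ₂ ∘ γ₂ ∘ γ₂ ∘ γ₁`. -/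
def csTau' : Fin 3 → List (Fin 3) :=
  substComp csGamma₁ (substComp csGamma₁ (substComp csGamma₂ (substComp csGamma₁
    (substComp csGamma₂ (substComp csGamma₂ (substComp csGamma₂ csGamma₁))))))


section Aux

variable {A : Type*}

lemma substInterval_empty (τ : ℕ → A → List A) {s t : ℕ} (h : t < s) (a : A) :
    substInterval τ s t a = [a] := by
  have h0 : t + 1 - s = 0 := by omega
  simp [substInterval, h0]

lemma substInterval_peel (τ : ℕ → A → List A) {s s' t : ℕ} (hs : s' = s + 1) (h : s ≤ t)
    (a : A) : substInterval τ s t a = applyWord (τ s) (substInterval τ s' t a) := by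
  subst hs
  have h1 : t + 1 - s = (t - s) + 1 := by omega
  have h2 : t + 1 - (s + 1) = t - s := by omega
  have h3 : ((List.range (t - s)).map fun i => τ (s + (i + 1)))
      = (List.range (t - s)).map fun i => τ (s + 1 + i) := by
    apply List.map_congr_left
    intro i _
    have : s + (i + 1) = s + 1 + i := by omega
    rw [this]
  simp only [substInterval, h1, h2, List.range_succ_eq_map, List.map_cons, List.map_map,
    List.foldr_cons, Function.comp_def, h3]
  rfl

lemma pair_infix_append {a b : A} {s r : List A} (h : [a, b] <:+: s ++ r) :
    [a, b] <:+: s ∨ [a, b] <:+: r ∨ ([a] <:+ s ∧ [b] <+: r) := by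
  obtain ⟨p, q, hpq⟩ := h
  rcases lt_trichotomy (p.length + 1) s.length with hlt | heq | hgt
  · left
    have hs : s = ((p ++ [a, b]) ++ q).take s.length := by
      rw [show (p ++ [a, b]) ++ q = s ++ r by simpa using hpq, List.take_left]
    rw [List.take_append,
      List.take_of_length_le (by simp; omega : (p ++ [a, b]).length ≤ s.length)] at hs
    exact ⟨p, q.take (s.length - (p ++ [a, b]).length), hs.symm⟩
  · right; right
    have hpq' : (p ++ [a]) ++ (b :: q) = s ++ r := by simpa using hpq
    have hl : (p ++ [a]).length = s.length := by simp; omega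
    obtain ⟨h1, h2⟩ := List.append_inj hpq' hl
    exact ⟨⟨p, h1⟩, ⟨q, by simp [← h2]⟩⟩
  · right; left
    have hs : r = ((p ++ ([a, b] ++ q))).drop s.length := by
      rw [show p ++ ([a, b] ++ q) = s ++ r by simpa using hpq, List.drop_left]
    rw [List.drop_append,
      show s.length - p.length = 0 by omega, List.drop_zero] at hs
    exact ⟨p.drop s.length, q, by rw [hs, List.append_assoc]⟩

lemma pair_infix_flatMap (σ : A → List A) (hσ : ∀ c, σ c ≠ []) :
    ∀ (u : List A) (a b : A), [a, b] <:+: u.flatMap σ →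
      (∃ c ∈ u, [a, b] <:+: σ c) ∨
        ∃ c d, [c, d] <:+: u ∧ [a] <:+ σ c ∧ [b] <+: σ d := by
  intro u
  induction u with
  | nil => intro a b h; simp at h
  | cons c t ih =>
    intro a b h
    have h' : [a, b] <:+: σ c ++ t.flatMap σ := by simpa using h
    rcases pair_infix_append h' with h1 | h2 | ⟨hs, hr⟩
    · exact Or.inl ⟨c, by simp, h1⟩
    · rcases ih a b h2 with ⟨d, hd, hinf⟩ | ⟨x, y, hxy, hx, hy⟩
      · exact Or.inl ⟨d, by simp [hd], hinf⟩
      · exact Or.inr ⟨x, y, hxy.trans (List.suffix_cons c t).isInfix, hx, hy⟩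
    · cases t with
      | nil => simp at hr
      | cons d t' =>
        obtain ⟨e, s', hed⟩ := List.exists_cons_of_ne_nil (hσ d)
        have hr' : [b] <+: e :: (s' ++ t'.flatMap σ) := by
          have : [b] <+: σ d ++ t'.flatMap σ := by simpa using hr
          simpa [hed] using this
        have hbe : b = e := (List.cons_prefix_cons.mp hr').1
        refine Or.inr ⟨c, d, ⟨[], t', rfl⟩, hs, ?_⟩
        rw [hed, hbe]
        exact ⟨s', rfl⟩

end Aux

lemma pairsIn_applyWord (σ : Fin 3 → List (Fin 3)) (hσ : ∀ c, σ c ≠ [])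
    (S T : List (Fin 3 × Fin 3))
    (hblock : ∀ a b c : Fin 3, [a, b] <:+: σ c → (a, b) ∈ T)
    (hcross : ∀ a b c d : Fin 3, (c, d) ∈ S → [a] <:+ σ c → [b] <+: σ d → (a, b) ∈ T)
    (u : List (Fin 3)) (h : ∀ a b : Fin 3, [a, b] <:+: u → (a, b) ∈ S) :
    ∀ a b : Fin 3, [a, b] <:+: applyWord σ u → (a, b) ∈ T := by
  intro a b hab
  rcases pair_infix_flatMap σ hσ u a b hab with ⟨c, _, h1⟩ | ⟨c, d, hcd, hc, hd⟩
  · exact hblock a b c h1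
  · exact hcross a b c d (h c d hcd) hc hd

/-- the target set of pairs: exactly the factors of length 2 of `csTau' 0`. -/
def csF : List (Fin 3 × Fin 3) := [(0,0),(0,1),(0,2),(1,0),(2,0)]

def csALL : List (Fin 3 × Fin 3) := [(0,0),(0,1),(0,2),(1,0),(1,1),(1,2),(2,0),(2,1),(2,2)]
def csA1 : List (Fin 3 × Fin 3) := [(0,0),(0,1),(0,2),(1,0),(1,1),(2,0),(2,1)]
def csA2 : List (Fin 3 × Fin 3) := [(0,2),(1,0),(1,1),(1,2),(2,0),(2,1)]
def csA3 : List (Fin 3 × Fin 3) := [(0,2),(1,2),(2,0),(2,1),(2,2)]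
def csA4 : List (Fin 3 × Fin 3) := [(0,2),(1,2),(2,0),(2,1),(2,2)]
def csA5 : List (Fin 3 × Fin 3) := [(0,1),(0,2),(1,0),(1,1),(2,1)]
def csA6 : List (Fin 3 × Fin 3) := [(0,2),(1,0),(1,2),(2,0),(2,1)]
def csA7 : List (Fin 3 × Fin 3) := [(0,1),(0,2),(1,0),(2,0),(2,1)]

/-- `τ'(1) = 1213113`, and whenever a directive sequence over `{γ₁,γ₂}`
has `τ_{n+1}, …, τ_{n+8} = γ₁, γ₁, γ₂, γ₁, γ₂, γ₂, γ₂, γ₁`, the composition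
`τ_{[n+1,n+8]}` is a word builder at level `n` (with `ab` a factor of `τ'(c)`). -/
theorem stmt8 :
    csTau' 0 = [0, 1, 0, 2, 0, 0, 2] ∧
      ∀ τ : ℕ → Fin 3 → List (Fin 3), (∀ m, τ m = csGamma₁ ∨ τ m = csGamma₂) →
        ∀ n : ℕ, τ (n + 1) = csGamma₁ → τ (n + 2) = csGamma₁ → τ (n + 3) = csGamma₂ →
          τ (n + 4) = csGamma₁ → τ (n + 5) = csGamma₂ → τ (n + 6) = csGamma₂ →
          τ (n + 7) = csGamma₂ → τ (n + 8) = csGamma₁ →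
          WordBuilder τ n 8 ∧
            ∀ a b : Fin 3, Precedes τ n a b → ∃ c : Fin 3, [a, b] <:+: csTau' c := by
  have hmem : ∀ a b : Fin 3, (a, b) ∈ csF → [a, b] <:+: csTau' 0 := by decide
  refine ⟨by decide, ?_⟩
  intro τ hτ n h1 h2 h3 h4 h5 h6 h7 h8
  have htau : ∀ c, substInterval τ (n + 1) (n + 8) c = csTau' c := by
    intro c
    rw [substInterval_peel (s' := n + 2) τ rfl (by omega), h1,
        substInterval_peel (s' := n + 3) τ rfl (by omega), h2,
        substInterval_peel (s' := n + 4) τ rfl (by omega), h3,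
        substInterval_peel (s' := n + 5) τ rfl (by omega), h4,
        substInterval_peel (s' := n + 6) τ rfl (by omega), h5,
        substInterval_peel (s' := n + 7) τ rfl (by omega), h6,
        substInterval_peel (s' := n + 8) τ rfl (by omega), h7,
        substInterval_peel (s' := n + 9) τ rfl (by omega), h8,
        substInterval_empty τ (show n + 8 < n + 9 by omega)]
    fin_cases c <;> rfl
  have hF : ∀ a b : Fin 3, Precedes τ n a b → (a, b) ∈ csF := by
    rintro a b ⟨m, hm, c, hinf⟩
    by_cases h8m : 8 ≤ m
    · rw [substInterval_peel (s' := n + 2) τ rfl (by omega), h1, substInterval_peel (s' := n + 3) τ rfl (by omega), h2, substInterval_peel (s' := n + 4) τ rfl (by omega), h3, substInterval_peel (s' := n + 5) τ rfl (by omega), h4, substInterval_peel (s' := n + 6) τ rfl (by omega), h5, substInterval_peel (s' := n + 7) τ rfl (by omega), h6, substInterval_peel (s' := n + 8) τ rfl (by omega), h7, substInterval_peel (s' := n + 9) τ rfl (by omega), h8] at hinf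
      set w := substInterval τ (n + 9) (n + m) c with hw
      have p0 : ∀ a b : Fin 3, [a, b] <:+: w → (a, b) ∈ csALL := by
        intro a b _
        exact (by decide : ∀ p : Fin 3 × Fin 3, p ∈ csALL) (a, b)
      have p1 := pairsIn_applyWord csGamma₁ (by decide) csALL csA1
        (by decide) (by decide) _ p0
      have p2 := pairsIn_applyWord csGamma₂ (by decide) csA1 csA2
        (by decide) (by decide) _ p1
      have p3 := pairsIn_applyWord csGamma₂ (by decide) csA2 csA3
        (by decide) (by decide) _ p2
      have p4 := pairsIn_applyWord csGamma₂ (by decide) csA3 csA4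
        (by decide) (by decide) _ p3
      have p5 := pairsIn_applyWord csGamma₁ (by decide) csA4 csA5
        (by decide) (by decide) _ p4
      have p6 := pairsIn_applyWord csGamma₂ (by decide) csA5 csA6
        (by decide) (by decide) _ p5
      have p7 := pairsIn_applyWord csGamma₁ (by decide) csA6 csA7
        (by decide) (by decide) _ p6
      have p8 := pairsIn_applyWord csGamma₁ (by decide) csA7 csF
        (by decide) (by decide) _ p7
      exact p8 a b hinf
    · have hm7 : m ≤ 7 := by omega
      interval_cases m
      · rw [substInterval_peel (s' := n + 2) τ rfl (by omega), h1,
            substInterval_empty τ (show n + 1 < n + 2 by omega)] at hinf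
        fin_cases c <;> (revert a b; decide)
      · rw [substInterval_peel (s' := n + 2) τ rfl (by omega), h1,
            substInterval_peel (s' := n + 3) τ rfl (by omega), h2,
            substInterval_empty τ (show n + 2 < n + 3 by omega)] at hinf
        fin_cases c <;> (revert a b; decide)
      · rw [substInterval_peel (s' := n + 2) τ rfl (by omega), h1,
            substInterval_peel (s' := n + 3) τ rfl (by omega), h2,
            substInterval_peel (s' := n + 4) τ rfl (by omega), h3,
            substInterval_empty τ (show n + 3 < n + 4 by omega)] at hinf
        fin_cases c <;> (revert a b; decide)
      · rw [substInterval_peel (s' := n + 2) τ rfl (by omega), h1,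
            substInterval_peel (s' := n + 3) τ rfl (by omega), h2,
            substInterval_peel (s' := n + 4) τ rfl (by omega), h3,
            substInterval_peel (s' := n + 5) τ rfl (by omega), h4,
            substInterval_empty τ (show n + 4 < n + 5 by omega)] at hinf
        fin_cases c <;> (revert a b; decide)
      · rw [substInterval_peel (s' := n + 2) τ rfl (by omega), h1,
            substInterval_peel (s' := n + 3) τ rfl (by omega), h2,
            substInterval_peel (s' := n + 4) τ rfl (by omega), h3,
            substInterval_peel (s' := n + 5) τ rfl (by omega), h4,
            substInterval_peel (s' := n + 6) τ rfl (by omega), h5,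
            substInterval_empty τ (show n + 5 < n + 6 by omega)] at hinf
        fin_cases c <;> (revert a b; decide)
      · rw [substInterval_peel (s' := n + 2) τ rfl (by omega), h1,
            substInterval_peel (s' := n + 3) τ rfl (by omega), h2,
            substInterval_peel (s' := n + 4) τ rfl (by omega), h3,
            substInterval_peel (s' := n + 5) τ rfl (by omega), h4,
            substInterval_peel (s' := n + 6) τ rfl (by omega), h5,
            substInterval_peel (s' := n + 7) τ rfl (by omega), h6,
            substInterval_empty τ (show n + 6 < n + 7 by omega)] at hinf
        fin_cases c <;> (revert a b; decide)
      · rw [substInterval_peel (s' := n + 2) τ rfl (by omega), h1,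
            substInterval_peel (s' := n + 3) τ rfl (by omega), h2,
            substInterval_peel (s' := n + 4) τ rfl (by omega), h3,
            substInterval_peel (s' := n + 5) τ rfl (by omega), h4,
            substInterval_peel (s' := n + 6) τ rfl (by omega), h5,
            substInterval_peel (s' := n + 7) τ rfl (by omega), h6,
            substInterval_peel (s' := n + 8) τ rfl (by omega), h7,
            substInterval_empty τ (show n + 7 < n + 8 by omega)] at hinf
        fin_cases c <;> (revert a b; decide)
  refine ⟨?_, ?_⟩
  · intro a b hab
    exact ⟨0, by rw [htau 0]; exact hmem a b (hF a b hab)⟩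
  · intro a b hab
    exact ⟨0, hmem a b (hF a b hab)⟩
end

section
/- Let (τ_n)_{n≥0} be any directive sequence in which each τ_n is a Brun substitution β_ij (i ≠ j in {1,2,3,4}), and suppose τ_{n+1} = β₁₄, τ_{n+2} = β₁₃, τ_{n+3} = β₁₂. If a precedes b at level n, then ab ∈ {11, 12, 13, 14, 21, 31, 41}. -/
open MeasureTheory

variable {A : Type*}

/-- The Brun substitution `β_ij : j ↦ ij, k ↦ k (k ≠ j)` on `{1,2,3,4}`
(letters `1,2,3,4` encoded as `0,1,2,3`). -/
def brun (i j : Fin 4) : Fin 4 → List (Fin 4) := fun k => if k = j then [i, j] else [k]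


lemma substInterval_step {A : Type*} (τ : ℕ → A → List A) (m n : ℕ) (h : m ≤ n) :
    substInterval τ m n = substComp (τ m) (substInterval τ (m + 1) n) := by
  unfold substInterval
  have h1 : n + 1 - m = (n - m) + 1 := by omega
  have h2 : n + 1 - (m + 1) = n - m := by omega
  rw [h1, h2, List.range_succ_eq_map]
  simp only [List.map_cons, List.map_map, List.foldr_cons, Nat.add_zero]
  have : List.map ((fun i => τ (m + i)) ∘ Nat.succ) (List.range (n - m)) =
      List.map (fun i => τ (m + 1 + i)) (List.range (n - m)) := by
    apply List.map_congr_left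
    intro i _
    simp only [Function.comp_apply]
    have e : m + i.succ = m + 1 + i := by omega
    rw [e]
  rw [this]

lemma substInterval_nil {A : Type*} (τ : ℕ → A → List A) (m n : ℕ) (h : n < m) :
    substInterval τ m n = fun a => [a] := by
  unfold substInterval
  have : n + 1 - m = 0 := by omega
  simp [this]

lemma head_flat (j b : Fin 4) (t : List (Fin 4)) (h : [b] <+: applyWord (brun 0 j) t) :
    b = 0 ∨ (b ≠ j ∧ ∃ t', t = b :: t') := by
  cases t with
  | nil => simp [applyWord] at h
  | cons y t' =>
    by_cases hy : y = j
    · left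
      subst hy
      simp only [applyWord, List.flatMap_cons, brun, if_pos rfl] at h
      obtain ⟨s, hs⟩ := h
      simpa using congrArg List.head? hs
    · right
      simp only [applyWord, List.flatMap_cons, brun, if_neg hy] at h
      obtain ⟨s, hs⟩ := h
      have hb : b = y := by simpa using congrArg List.head? hs
      subst hb
      exact ⟨hy, t', rfl⟩

lemma pair_in_flat (j a b : Fin 4) :
    ∀ w : List (Fin 4), [a, b] <:+: applyWord (brun 0 j) w →
      a = 0 ∨ b = 0 ∨ (b ≠ j ∧ [a, b] <:+: w) := by
  intro w
  induction w with
  | nil => intro h; simp [applyWord] at h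
  | cons x t ih =>
    intro h
    by_cases hx : x = j
    · simp only [applyWord, List.flatMap_cons, brun, if_pos hx, List.cons_append,
        List.nil_append] at h
      rcases List.infix_cons_iff.1 h with hp | h'
      · left
        obtain ⟨s, hs⟩ := hp
        simpa using congrArg List.head? hs
      rcases List.infix_cons_iff.1 h' with hp | h''
      · -- [a,b] <+: j :: applyWord (brun 0 j) t ; so a = j, [b] <+: applyWord ... t
        rw [List.cons_prefix_cons] at hp
        obtain ⟨ha, hb⟩ := hp
        rcases head_flat j b t hb with hb0 | ⟨hbj, t', ht⟩
        · right; left; exact hb0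
        · right; right
          exact ⟨hbj, by rw [ht, ha, hx]; exact ⟨[], t', by simp⟩⟩
      · rcases ih h'' with h | h | ⟨hbj, hf⟩
        · left; exact h
        · right; left; exact h
        · right; right; exact ⟨hbj, hf.trans (List.infix_cons_iff.2 (Or.inr (List.infix_refl t)))⟩
    · simp only [applyWord, List.flatMap_cons, brun, if_neg hx, List.cons_append,
        List.nil_append] at h
      rcases List.infix_cons_iff.1 h with hp | h'
      · rw [List.cons_prefix_cons] at hp
        obtain ⟨ha, hb⟩ := hp
        rcases head_flat j b t hb with hb0 | ⟨hbj, t', ht⟩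
        · right; left; exact hb0
        · right; right
          exact ⟨hbj, by rw [ht, ha]; exact ⟨[], t', by simp⟩⟩
      · rcases ih h' with h | h | ⟨hbj, hf⟩
        · left; exact h
        · right; left; exact h
        · right; right; exact ⟨hbj, hf.trans (List.infix_cons_iff.2 (Or.inr (List.infix_refl t)))⟩

/-- if the directive sequence consists of Brun substitutions with
`τ_{n+1} = β₁₄`, `τ_{n+2} = β₁₃`, `τ_{n+3} = β₁₂`, and `a` precedes `b` at level `n`,
then `ab ∈ {11,12,13,14,21,31,41}`. -/
theorem stmt10 (τ : ℕ → Fin 4 → List (Fin 4))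
    (hbrun : ∀ m : ℕ, ∃ i j : Fin 4, i ≠ j ∧ τ m = brun i j)
    (n : ℕ) (h1 : τ (n + 1) = brun 0 3) (h2 : τ (n + 2) = brun 0 2)
    (h3 : τ (n + 3) = brun 0 1)
    (a b : Fin 4) (hab : Precedes τ n a b) :
    (a, b) ∈ ({(0, 0), (0, 1), (0, 2), (0, 3), (1, 0), (2, 0), (3, 0)} :
      Set (Fin 4 × Fin 4)) := by
  obtain ⟨m, hm, c, hfac⟩ := hab
  have hmem : ∀ x y : Fin 4, x = 0 ∨ y = 0 →
      (x, y) ∈ ({(0, 0), (0, 1), (0, 2), (0, 3), (1, 0), (2, 0), (3, 0)} :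
        Set (Fin 4 × Fin 4)) := by
    intro x y hxy
    simp only [Set.mem_insert_iff, Set.mem_singleton_iff, Prod.mk.injEq]
    rcases hxy with rfl | rfl
    · fin_cases y <;> simp
    · fin_cases x <;> simp
  rw [substInterval_step τ (n + 1) (n + m) (by omega), h1] at hfac
  rcases pair_in_flat 3 a b _ hfac with h | h | ⟨hb3, hfac⟩
  · exact hmem a b (Or.inl h)
  · exact hmem a b (Or.inr h)
  rcases Nat.lt_or_ge m 2 with hm2 | hm2
  · rw [substInterval_nil τ (n + 1 + 1) (n + m) (by omega)] at hfac
    exact absurd hfac.length_le (by simp)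
  rw [show n + 1 + 1 = n + 2 from rfl,
    substInterval_step τ (n + 2) (n + m) (by omega), h2] at hfac
  rcases pair_in_flat 2 a b _ hfac with h | h | ⟨hb2, hfac⟩
  · exact hmem a b (Or.inl h)
  · exact hmem a b (Or.inr h)
  rcases Nat.lt_or_ge m 3 with hm3 | hm3
  · rw [substInterval_nil τ (n + 2 + 1) (n + m) (by omega)] at hfac
    exact absurd hfac.length_le (by simp)
  rw [show n + 2 + 1 = n + 3 from rfl,
    substInterval_step τ (n + 3) (n + m) (by omega), h3] at hfac
  rcases pair_in_flat 1 a b _ hfac with h | h | ⟨hb1, _⟩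
  · exact hmem a b (Or.inl h)
  · exact hmem a b (Or.inr h)
  · have hb0 : b = 0 := by fin_cases b <;> simp_all
    exact hmem a b (Or.inr hb0)
end

section
/- Let Δ = {x ∈ ℝ³ : x₁,x₂,x₃ ≥ 0, x₁+x₂+x₃ = 1}, let T_C : Δ → Δ be the Cassaigne–Selmer map, let C₁, C₂ be the Cassaigne–Selmer matrices, and define A : Δ → {C₁, C₂} by A(x) = C₁ if x₁ ≥ x₃ and A(x) = C₂ if x₃ > x₁. Then for every k ∈ ℕ and every sequence i₀, i₁, …, i_k ∈ {1,2}, the set {x ∈ Δ : A(T_C^j x) = C_{i_j} for all 0 ≤ j ≤ k} has positive measure, in the sense that its image under the projection (x₁,x₂,x₃) ↦ (x₁,x₂) has positive two-dimensional Lebesgue measure. -/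
open MeasureTheory

noncomputable section

/-- The simplex `Δ = {x ∈ ℝ³ : x₁,x₂,x₃ ≥ 0, x₁+x₂+x₃ = 1}`. -/
def csSimplex : Set (ℝ × ℝ × ℝ) :=
  {x | 0 ≤ x.1 ∧ 0 ≤ x.2.1 ∧ 0 ≤ x.2.2 ∧ x.1 + x.2.1 + x.2.2 = 1}

/-- The Cassaigne–Selmer map `T_C`. -/
def casSel (x : ℝ × ℝ × ℝ) : ℝ × ℝ × ℝ :=
  if x.2.2 ≤ x.1 then
    ((x.1 - x.2.2) / (x.1 + x.2.1), x.2.2 / (x.1 + x.2.1), x.2.1 / (x.1 + x.2.1))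
  else
    (x.2.1 / (x.2.1 + x.2.2), x.1 / (x.2.1 + x.2.2), (x.2.2 - x.1) / (x.2.1 + x.2.2))

/-- The Cassaigne–Selmer matrix `C₁`. -/
def csMat₁ : Matrix (Fin 3) (Fin 3) ℤ := !![1, 1, 0; 0, 0, 1; 0, 1, 0]

/-- The Cassaigne–Selmer matrix `C₂`. -/
def csMat₂ : Matrix (Fin 3) (Fin 3) ℤ := !![0, 1, 0; 1, 0, 0; 0, 1, 1]

/-- The matrix selection map: `A(x) = C₁` if `x₁ ≥ x₃`, and `A(x) = C₂` if `x₃ > x₁`. -/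
def csA (x : ℝ × ℝ × ℝ) : Matrix (Fin 3) (Fin 3) ℤ :=
  if x.2.2 ≤ x.1 then csMat₁ else csMat₂

/-!
Away from the plane `x₁ = x₃`, `T_C` is continuous and preserves the open positive octant, and
the regions `x₃ < x₁` and `x₁ < x₃` are open. Hence the positive points whose first `k + 1`
iterates lie strictly inside the prescribed regions form an open set, and its preimage under
`(x₁, x₂) ↦ (x₁, x₂, 1 - x₁ - x₂)` is an open subset of the projected cylinder. It is nonempty
because each branch of `T_C` maps its strict region onto the open simplex, the inverse being the
projective action of `C₁` resp. `C₂`: pulling back any interior point along the prescribed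
branches `k + 1` times gives a point with the prescribed itinerary.
-/

namespace CassaigneSelmer

def posOctant : Set (ℝ × ℝ × ℝ) := {x | 0 < x.1 ∧ 0 < x.2.1 ∧ 0 < x.2.2}

def InOpenRegion (M : Matrix (Fin 3) (Fin 3) ℤ) (x : ℝ × ℝ × ℝ) : Prop :=
  (M = csMat₁ ∧ x.2.2 < x.1) ∨ (M = csMat₂ ∧ x.1 < x.2.2)

lemma InOpenRegion.ne {M : Matrix (Fin 3) (Fin 3) ℤ} {x : ℝ × ℝ × ℝ} (h : InOpenRegion M x) :
    x.1 ≠ x.2.2 := by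
  rcases h with ⟨-, h⟩ | ⟨-, h⟩
  exacts [h.ne', h.ne]

lemma csA_eq_of_inOpenRegion {M : Matrix (Fin 3) (Fin 3) ℤ} {x : ℝ × ℝ × ℝ}
    (h : InOpenRegion M x) : csA x = M := by
  rcases h with ⟨rfl, h⟩ | ⟨rfl, h⟩
  · exact if_pos h.le
  · exact if_neg (not_le.2 h)

lemma isOpen_posOctant : IsOpen posOctant := by
  simp only [posOctant, Set.ofPred_and]
  exact (isOpen_lt continuous_const continuous_fst).inter
    ((isOpen_lt continuous_const (by fun_prop)).inter (isOpen_lt continuous_const (by fun_prop)))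

lemma isOpen_setOf_inOpenRegion (M : Matrix (Fin 3) (Fin 3) ℤ) :
    IsOpen {x | InOpenRegion M x} := by
  simp only [InOpenRegion, Set.ofPred_or, Set.ofPred_and]
  exact (isOpen_const.inter (isOpen_lt (by fun_prop) (by fun_prop))).union
    (isOpen_const.inter (isOpen_lt (by fun_prop) (by fun_prop)))

lemma casSel_mem_posOctant {x : ℝ × ℝ × ℝ} (hx : x ∈ posOctant) (hne : x.1 ≠ x.2.2) :
    casSel x ∈ posOctant := by
  obtain ⟨h₁, h₂, h₃⟩ := hx
  rcases hne.lt_or_gt with h | h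
  · simp only [casSel, if_neg (not_le.2 h)]
    exact ⟨by positivity, by positivity, div_pos (by linarith) (by positivity)⟩
  · simp only [casSel, if_pos h.le]
    exact ⟨div_pos (by linarith) (by positivity), by positivity, by positivity⟩

lemma continuousAt_casSel {x : ℝ × ℝ × ℝ} (hx : x ∈ posOctant) (hne : x.1 ≠ x.2.2) :
    ContinuousAt casSel x := by
  obtain ⟨h₁, h₂, h₃⟩ := hx
  rcases hne.lt_or_gt with h | h
  · have hd : x.2.1 + x.2.2 ≠ 0 := by positivity
    have hev : (fun y : ℝ × ℝ × ℝ ↦ (y.2.1 / (y.2.1 + y.2.2), y.1 / (y.2.1 + y.2.2),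
        (y.2.2 - y.1) / (y.2.1 + y.2.2))) =ᶠ[nhds x] casSel :=
      (ContinuousAt.eventually_lt (by fun_prop) (by fun_prop) h).mono
        fun y hy ↦ (if_neg (not_le.2 hy)).symm
    exact ContinuousAt.congr (by fun_prop (disch := exact hd)) hev
  · have hd : x.1 + x.2.1 ≠ 0 := by positivity
    have hev : (fun y : ℝ × ℝ × ℝ ↦ ((y.1 - y.2.2) / (y.1 + y.2.1), y.2.2 / (y.1 + y.2.1),
        y.2.1 / (y.1 + y.2.1))) =ᶠ[nhds x] casSel :=
      (ContinuousAt.eventually_lt (by fun_prop) (by fun_prop) h).mono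
        fun y hy ↦ (if_pos hy.le).symm
    exact ContinuousAt.congr (by fun_prop (disch := exact hd)) hev

lemma continuousOn_casSel (M : Matrix (Fin 3) (Fin 3) ℤ) :
    ContinuousOn casSel (posOctant ∩ {x | InOpenRegion M x}) :=
  fun _ hx ↦ (continuousAt_casSel hx.1 hx.2.ne).continuousWithinAt

def strictCylinder (k : ℕ) (Msel : ℕ → Matrix (Fin 3) (Fin 3) ℤ) : Set (ℝ × ℝ × ℝ) :=
  {x | x ∈ posOctant ∧ ∀ j ≤ k, InOpenRegion (Msel j) (casSel^[j] x)}

section strictCylinder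

variable (Msel : ℕ → Matrix (Fin 3) (Fin 3) ℤ)

lemma strictCylinder_zero :
    strictCylinder 0 Msel = posOctant ∩ {x | InOpenRegion (Msel 0) x} := by
  ext x
  simp [strictCylinder]

lemma strictCylinder_succ (k : ℕ) :
    strictCylinder (k + 1) Msel = (posOctant ∩ {x | InOpenRegion (Msel 0) x}) ∩
      casSel ⁻¹' strictCylinder k (fun j ↦ Msel (j + 1)) := by
  ext x
  simp only [strictCylinder, Set.mem_inter_iff, Set.mem_preimage, Set.mem_ofPred_eq,
    ← Function.iterate_succ_apply]
  constructor
  · rintro ⟨hx, h⟩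
    have h₀ := h 0 k.zero_le.step
    exact ⟨⟨hx, h₀⟩, casSel_mem_posOctant hx h₀.ne, fun j hj ↦ h (j + 1) (by omega)⟩
  · rintro ⟨⟨hx, h₀⟩, -, h⟩
    refine ⟨hx, fun j hj ↦ ?_⟩
    cases j with
    | zero => exact h₀
    | succ j => exact h j (by omega)

lemma isOpen_strictCylinder (k : ℕ) : IsOpen (strictCylinder k Msel) := by
  induction k generalizing Msel with
  | zero =>
    rw [strictCylinder_zero]
    exact isOpen_posOctant.inter (isOpen_setOf_inOpenRegion _)
  | succ k ih =>
    rw [strictCylinder_succ]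
    exact (continuousOn_casSel _).isOpen_inter_preimage
      (isOpen_posOctant.inter (isOpen_setOf_inOpenRegion _)) (ih _)

end strictCylinder

lemma exists_inOpenRegion_casSel_eq {M : Matrix (Fin 3) (Fin 3) ℤ}
    (hM : M = csMat₁ ∨ M = csMat₂) {y : ℝ × ℝ × ℝ} (hy : y ∈ posOctant) (hyΔ : y ∈ csSimplex) :
    ∃ x ∈ csSimplex, x ∈ posOctant ∧ InOpenRegion M x ∧ casSel x = y := by
  obtain ⟨a, b, c⟩ := y
  obtain ⟨ha, hb, hc⟩ := hy
  have hsum : a + b + c = 1 := hyΔ.2.2.2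
  -- `C₁ (a, b, c) = (a + b, c, b)` and `C₂ (a, b, c) = (b, a, b + c)` have coordinate sum `1 + b`.
  rcases hM with rfl | rfl
  · have hlt : b / (1 + b) < (a + b) / (1 + b) := by gcongr; linarith
    refine ⟨((a + b) / (1 + b), c / (1 + b), b / (1 + b)),
      ⟨by positivity, by positivity, by positivity, ?_⟩,
      ⟨by positivity, by positivity, by positivity⟩, Or.inl ⟨rfl, hlt⟩, ?_⟩
    · field_simp; linarith
    · simp only [casSel, if_pos hlt.le]
      ext <;> field_simp <;> grind
  · have hlt : b / (1 + b) < (b + c) / (1 + b) := by gcongr; linarith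
    refine ⟨(b / (1 + b), a / (1 + b), (b + c) / (1 + b)),
      ⟨by positivity, by positivity, by positivity, ?_⟩,
      ⟨by positivity, by positivity, by positivity⟩, Or.inr ⟨rfl, hlt⟩, ?_⟩
    · field_simp; linarith
    · simp only [casSel, if_neg hlt.not_ge]
      ext <;> field_simp <;> grind

lemma exists_mem_csSimplex_strictCylinder (k : ℕ) (Msel : ℕ → Matrix (Fin 3) (Fin 3) ℤ)
    (hM : ∀ j ≤ k, Msel j = csMat₁ ∨ Msel j = csMat₂) :
    ∃ x ∈ csSimplex, x ∈ strictCylinder k Msel := by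
  induction k generalizing Msel with
  | zero =>
    obtain ⟨x, hxΔ, hx, hreg, -⟩ := exists_inOpenRegion_casSel_eq (hM 0 le_rfl)
      (y := (1 / 3, 1 / 3, 1 / 3)) (by norm_num [posOctant]) (by norm_num [csSimplex])
    exact ⟨x, hxΔ, strictCylinder_zero Msel ▸ ⟨hx, hreg⟩⟩
  | succ k ih =>
    obtain ⟨y, hyΔ, hy⟩ := ih (fun j ↦ Msel (j + 1)) fun j hj ↦ hM (j + 1) (by omega)
    obtain ⟨x, hxΔ, hx, hreg, rfl⟩ := exists_inOpenRegion_casSel_eq (hM 0 k.zero_le.step) hy.1 hyΔ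
    exact ⟨x, hxΔ, strictCylinder_succ Msel k ▸ ⟨⟨hx, hreg⟩, hy⟩⟩

end CassaigneSelmer

open CassaigneSelmer in
/-- every Cassaigne–Selmer cylinder
`{x ∈ Δ : A(T_C^j x) = C_{i_j}, 0 ≤ j ≤ k}` has positive measure, in the sense that its
projection to the first two coordinates has positive two-dimensional Lebesgue measure. -/
theorem stmt12 (k : ℕ) (Msel : ℕ → Matrix (Fin 3) (Fin 3) ℤ)
    (hM : ∀ j ≤ k, Msel j = csMat₁ ∨ Msel j = csMat₂) :
    0 < volume ((fun x : ℝ × ℝ × ℝ => (x.1, x.2.1)) ''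
      {x | x ∈ csSimplex ∧ ∀ j ≤ k, csA (casSel^[j] x) = Msel j}) := by
  let lift : ℝ × ℝ → ℝ × ℝ × ℝ := fun p ↦ (p.1, p.2, 1 - p.1 - p.2)
  have hW : IsOpen (lift ⁻¹' strictCylinder k Msel) :=
    (isOpen_strictCylinder Msel k).preimage (by fun_prop)
  obtain ⟨x, hxΔ, hx⟩ := exists_mem_csSimplex_strictCylinder k Msel hM
  have hlift : lift (x.1, x.2.1) = x := Prod.ext rfl (Prod.ext rfl (by linarith [hxΔ.2.2.2]))
  refine (hW.measure_pos volume ⟨(x.1, x.2.1), hlift ▸ hx⟩).trans_le (measure_mono ?_)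
  rintro p ⟨⟨hp₁, hp₂, hp₃⟩, hreg⟩
  exact ⟨lift p, ⟨⟨hp₁.le, hp₂.le, hp₃.le, by ring⟩, fun j hj ↦ csA_eq_of_inOpenRegion (hreg j hj)⟩,
    rfl⟩
end
end

section
/- Let d ≥ 1, α ∈ T^d = (ℝ/ℤ)^d, and let F₁, …, F_h be a natural measurable partition of T^d such that the associated subshift X ⊆ {1,…,h}^ℤ is a natural coding of the translation R_α (i.e., for every x ∈ X the set ⋂_{n∈ℕ} closure(⋂_{k=0}^{n} R_α^{-k}(interior F_{x_k})) is a singleton). Then for every continuous f : T^d → ℝ and every ε > 0 there exist n ∈ ℕ and real coefficients (a_w) indexed by the words w of length n+1 in the language L(F) such that, for Haar-almost every ω ∈ T^d, |f(ω) − Σ_w a_w·1_{F_w}(ω)| < ε, where F_w := ⋂_{k=0}^{n} R_α^{-k} F_{w_k}. In particular, the algebra generated by the indicator functions {1_{F_w} : w ∈ L(F)} has L^∞-closure containing all continuous functions on T^d. -/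
/-!
Outside the null set of orbits that meet some `frontier (F i)`, every orbit point `ω + m • α`
lies in the interior of exactly one piece. Such an `ω` therefore has a coding `x` in the subshift,
and `ω` lies in the refined cell `F_w` of exactly one word `w`, namely the prefix of `x`. Taking
limits along a free ultrafilter, the natural-coding hypothesis forces the closures of the prefix
cells around coded points to shrink uniformly; by uniform continuity of `f`, one may then take
`a_w` to be the value of `f` at any point of the cell of `w`.
-/

open MeasureTheory
open scoped Classical

noncomputable section

/-- The `d`-dimensional torus `T^d = (ℝ/ℤ)^d`. -/
abbrev Torus (d : ℕ) := Fin d → AddCircle (1 : ℝ)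

/-- A word `w` of length `m` over `{1,…,h}` belongs to the language of the partition
`F` under the translation `R_α` if `⋂_{k<m} R_α^{-k}(interior F_{w_k}) ≠ ∅`. -/
def LangWord {d h : ℕ} (α : Torus d) (F : Fin h → Set (Torus d)) {m : ℕ}
    (w : Fin m → Fin h) : Prop :=
  (⋂ k : Fin m, (fun ω : Torus d => ω + (k : ℕ) • α) ⁻¹' interior (F (w k))).Nonempty

open Filter Set Topology

section Coding

variable {G ι : Type*} [AddGroup G] [TopologicalSpace G]

def wordCell (α : G) (F : ι → Set G) {m : ℕ} (w : Fin m → ι) : Set G :=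
  ⋂ k : Fin m, (· + (k : ℕ) • α) ⁻¹' interior (F (w k))

abbrev prefixCell (α : G) (F : ι → Set G) (x : ℤ → ι) (n : ℕ) : Set G :=
  wordCell α F fun k : Fin (n + 1) => x k

def subshift (α : G) (F : ι → Set G) : Set (ℤ → ι) :=
  {x | ∀ (m : ℤ) (n : ℕ), (wordCell α F fun i : Fin (n + 1) => x (m + (i : ℕ))).Nonempty}

def IsCoding (α : G) (F : ι → Set G) (x : ℤ → ι) (ω : G) : Prop :=
  ∀ m : ℤ, ω + m • α ∈ interior (F (x m))

variable {α : G} {F : ι → Set G}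

theorem prefixCell_antitone (x : ℤ → ι) : Antitone (prefixCell α F x) := by
  intro n n' hnn' ω hω
  simp only [prefixCell, wordCell, mem_iInter] at hω ⊢
  exact fun k => hω ⟨k, by omega⟩

theorem IsCoding.add_zsmul_mem_wordCell {x : ℤ → ι} {ω : G} (hx : IsCoding α F x ω)
    (m : ℤ) (n : ℕ) : ω + m • α ∈ wordCell α F fun i : Fin n => x (m + (i : ℕ)) := by
  refine mem_iInter.mpr fun k => ?_
  simpa only [mem_preimage, add_assoc, ← natCast_zsmul, ← add_zsmul] using hx (m + (k : ℕ))

theorem IsCoding.mem_wordCell {x : ℤ → ι} {ω : G} (hx : IsCoding α F x ω) (n : ℕ) :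
    ω ∈ wordCell α F fun i : Fin n => x i := by
  simpa using hx.add_zsmul_mem_wordCell 0 n

theorem IsCoding.mem_subshift {x : ℤ → ι} {ω : G} (hx : IsCoding α F x ω) :
    x ∈ subshift α F :=
  fun m n => ⟨_, hx.add_zsmul_mem_wordCell m (n + 1)⟩

theorem IsCoding.mem_iInter_preimage_iff {x : ℤ → ι} {ω : G} (hxω : IsCoding α F x ω)
    (hx : ∀ m i, ω + m • α ∈ F i → x m = i) {n : ℕ} (w : Fin n → ι) :
    ω ∈ ⋂ k : Fin n, (· + (k : ℕ) • α) ⁻¹' F (w k) ↔ w = fun k : Fin n => x k := by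
  constructor
  · intro hw
    funext k
    refine (hx k (w k) ?_).symm
    simpa only [natCast_zsmul, mem_preimage] using mem_iInter.mp hw k
  · rintro rfl
    exact iInter_mono (fun k => preimage_mono interior_subset) (hxω.mem_wordCell n)

end Coding

theorem Finset.sum_mul_indicator_eq_of_mem_iff {X β : Type*} {s : Finset β} {S : β → Set X}
    {ω : X} {b : β} (a : β → ℝ) (hb : b ∈ s) (hS : ∀ w, ω ∈ S w ↔ w = b) :
    ∑ w ∈ s, a w * (S w).indicator (fun _ => (1 : ℝ)) ω = a b := by
  rw [Finset.sum_eq_single_of_mem b hb, indicator_of_mem ((hS b).mpr rfl), mul_one]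
  intro w _ hw
  rw [indicator_of_notMem (mt (hS w).mp hw), mul_zero]

theorem interior_inter_interior_eq_empty {X : Type*} [TopologicalSpace X] [MeasurableSpace X]
    (μ : Measure X) [μ.IsOpenPosMeasure] {s t : Set X} (hst : μ (s ∩ t) = 0) :
    interior s ∩ interior t = ∅ :=
  ((isOpen_interior.inter isOpen_interior).measure_eq_zero_iff μ).mp <|
    measure_mono_null (inter_subset_inter interior_subset interior_subset) hst

section AlmostEveryPoint

variable {G ι : Type*} [AddGroup G] [TopologicalSpace G] [MeasurableSpace G] [MeasurableAdd G]
  [Countable ι] (μ : Measure G) [μ.IsAddRightInvariant] [μ.IsOpenPosMeasure]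
  {α : G} {F : ι → Set G}

theorem ae_exists_isCoding (hcover : ⋃ i, F i = univ)
    (hdisj : ∀ i j, i ≠ j → μ (F i ∩ F j) = 0) (hbdry : ∀ i, μ (frontier (F i)) = 0) :
    ∀ᵐ ω ∂μ, ∃ x, IsCoding α F x ω ∧ ∀ m i, ω + m • α ∈ F i → x m = i := by
  have hgeneric : ∀ᵐ ω ∂μ, ∀ (m : ℤ) i, ω + m • α ∉ frontier (F i) :=
    ae_all_iff.mpr fun m => ae_all_iff.mpr fun i => measure_eq_zero_iff_ae_notMem.mp <|
      (measure_preimage_add_right μ (m • α) _).trans (hbdry i)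
  filter_upwards [hgeneric] with ω hω
  have hint : ∀ m i, ω + m • α ∈ F i → ω + m • α ∈ interior (F i) :=
    fun m i hi => (mem_interior_iff_notMem_frontier hi).mpr (hω m i)
  have hcode : ∀ m : ℤ, ∃ i, ω + m • α ∈ interior (F i) := fun m =>
    let ⟨i, hi⟩ := mem_iUnion.mp (hcover ▸ mem_univ (ω + m • α))
    ⟨i, hint m i hi⟩
  choose x hx using hcode
  refine ⟨x, hx, fun m i hi => ?_⟩
  by_contra hne
  have hempty := interior_inter_interior_eq_empty μ (hdisj _ _ hne)
  exact hempty.subset ⟨hx m, hint m i hi⟩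

end AlmostEveryPoint

theorem exists_forall_isCoding_dist_lt {G ι : Type*} [AddGroup G] [PseudoMetricSpace G]
    [CompactSpace G] [Finite ι] {α : G} {F : ι → Set G}
    (hcoding : ∀ x ∈ subshift α F, (⋂ n, closure (prefixCell α F x n)).Subsingleton)
    {δ : ℝ} (hδ : 0 < δ) :
    ∃ n, ∀ x ω, IsCoding α F x ω → ∀ p ∈ closure (prefixCell α F x n), dist p ω < δ := by
  by_contra! hfar
  choose x ω hxω p hp hdist using hfar
  set U := hyperfilter ℕ
  have hlim : ∀ m, ∃ i, ∀ᶠ j in U, x j m = i := fun m =>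
    U.eventually_exists_iff.mp (.of_forall fun j => ⟨_, rfl⟩)
  choose y hy using hlim
  obtain ⟨⟨a, b⟩, hab⟩ : ∃ z, Tendsto (fun j => (p j, ω j)) U (𝓝 z) :=
    ⟨_, (U.map fun j => (p j, ω j)).le_nhds_lim⟩
  have hwindow : ∀ (m : ℤ) (n : ℕ), ∀ᶠ j in U, ∀ i : Fin n, x j (m + i) = y (m + i) :=
    fun m n => eventually_all.mpr fun i => hy _
  have hy_mem : y ∈ subshift α F := by
    intro m n
    obtain ⟨j, hj⟩ := (hwindow m (n + 1)).exists
    simpa only [hj] using (hxω j).mem_subshift m n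
  have hcell : ∀ n, ∀ᶠ j in U, p j ∈ closure (prefixCell α F y n) ∧
      ω j ∈ closure (prefixCell α F y n) := by
    intro n
    have hge : ∀ᶠ j in U, n ≤ j :=
      hyperfilter_le_cofinite (Nat.cofinite_eq_atTop ▸ eventually_ge_atTop n)
    filter_upwards [hge, hwindow 0 (n + 1)] with j hj hxy
    have hsub : prefixCell α F (x j) j ⊆ prefixCell α F y n := by
      simp only [zero_add] at hxy
      simpa only [prefixCell, hxy] using prefixCell_antitone (x j) hj
    exact ⟨closure_mono hsub (hp j), subset_closure (hsub ((hxω j).mem_wordCell (j + 1)))⟩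
  have ha : a ∈ ⋂ n, closure (prefixCell α F y n) := mem_iInter.mpr fun n =>
    isClosed_closure.mem_of_tendsto ((continuous_fst.tendsto _).comp hab)
      ((hcell n).mono fun _ h => h.1)
  have hb : b ∈ ⋂ n, closure (prefixCell α F y n) := mem_iInter.mpr fun n =>
    isClosed_closure.mem_of_tendsto ((continuous_snd.tendsto _).comp hab)
      ((hcell n).mono fun _ h => h.2)
  have hδab : δ ≤ dist a b :=
    ge_of_tendsto ((continuous_dist.tendsto _).comp hab) (.of_forall hdist)
  rw [hcoding y hy_mem ha hb, dist_self] at hδab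
  linarith

theorem stmt13_general (d h : ℕ) (α : Torus d) (F : Fin h → Set (Torus d))
    (hcover : (⋃ i, F i) = Set.univ)
    (hdisj : ∀ i j : Fin h, i ≠ j → volume (F i ∩ F j) = 0)
    (hbdry : ∀ i, volume (frontier (F i)) = 0)
    (hcoding : ∀ x : ℤ → Fin h,
      (∀ (m : ℤ) (n : ℕ), LangWord α F fun i : Fin (n + 1) => x (m + (i : ℕ))) →
      ∃! ω : Torus d, ω ∈ ⋂ n : ℕ,
        closure (⋂ k : Fin (n + 1),
          (fun ω' : Torus d => ω' + (k : ℕ) • α) ⁻¹' interior (F (x (k : ℕ)))))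
    (f : Torus d → ℝ) (hf : Continuous f) (ε : ℝ) (hε : 0 < ε) :
    ∃ (n : ℕ) (a : (Fin (n + 1) → Fin h) → ℝ),
      ∀ᵐ ω ∂(volume : Measure (Torus d)),
        |f ω - ∑ w ∈ Finset.univ.filter (fun w : Fin (n + 1) → Fin h => LangWord α F w),
          a w * Set.indicator
            (⋂ k : Fin (n + 1), (fun ω' : Torus d => ω' + (k : ℕ) • α) ⁻¹' F (w k))
            (fun _ => (1 : ℝ)) ω| < ε := by
  obtain ⟨δ, hδ, hfδ⟩ :=
    Metric.uniformContinuous_iff.mp (CompactSpace.uniformContinuous_of_continuous hf) ε hε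
  obtain ⟨n, hn⟩ :=
    exists_forall_isCoding_dist_lt (fun x hx _ hp _ hq => (hcoding x hx).unique hp hq) hδ
  refine ⟨n, fun w => f (Classical.epsilon (· ∈ wordCell α F w)), ?_⟩
  filter_upwards [ae_exists_isCoding volume (α := α) hcover hdisj hbdry] with ω ⟨x, hxω, hx⟩
  have hω := hxω.mem_wordCell (n + 1)
  rw [Finset.sum_mul_indicator_eq_of_mem_iff _
      (Finset.mem_filter.mpr ⟨Finset.mem_univ _, ω, hω⟩) (hxω.mem_iInter_preimage_iff hx),
    abs_sub_comm, ← Real.dist_eq]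
  exact hfδ (hn x ω hxω _ (subset_closure (Classical.epsilon_spec ⟨ω, hω⟩)))

/-- if the subshift associated to a natural measurable partition is a
natural coding of `R_α`, then every continuous function is a.e. `ε`-approximated by a
finite linear combination of indicators of the refined cells `F_w`, `w ∈ L(F)`. -/
theorem stmt13 (d h : ℕ) (hd : 1 ≤ d) (α : Torus d) (F : Fin h → Set (Torus d))
    (hcover : (⋃ i, F i) = Set.univ)
    (hdisj : ∀ i j : Fin h, i ≠ j → volume (F i ∩ F j) = 0)
    (hmeas : ∀ i, MeasurableSet (F i))
    (hdense : ∀ i, F i ⊆ closure (interior (F i)))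
    (hbdry : ∀ i, volume (frontier (F i)) = 0)
    (hcoding : ∀ x : ℤ → Fin h,
      (∀ (m : ℤ) (n : ℕ), LangWord α F fun i : Fin (n + 1) => x (m + (i : ℕ))) →
      ∃! ω : Torus d, ω ∈ ⋂ n : ℕ,
        closure (⋂ k : Fin (n + 1),
          (fun ω' : Torus d => ω' + (k : ℕ) • α) ⁻¹' interior (F (x (k : ℕ)))))
    (f : Torus d → ℝ) (hf : Continuous f) (ε : ℝ) (hε : 0 < ε) :
    ∃ (n : ℕ) (a : (Fin (n + 1) → Fin h) → ℝ),
      ∀ᵐ ω ∂(volume : Measure (Torus d)),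
        |f ω - ∑ w ∈ Finset.univ.filter (fun w : Fin (n + 1) → Fin h => LangWord α F w),
          a w * Set.indicator
            (⋂ k : Fin (n + 1), (fun ω' : Torus d => ω' + (k : ℕ) • α) ⁻¹' F (w k))
            (fun _ => (1 : ℝ)) ω| < ε :=
  stmt13_general d h α F hcover hdisj hbdry hcoding f hf ε hε
end
end

section
/- Let A be a finite set and X ⊆ A^ℤ a nonempty closed shift-invariant set that is minimal (every shift-orbit closure equals X). Let f : X → ℝ be locally constant, i.e., there is N ∈ ℕ such that f(x) = f(y) whenever x_k = y_k for all |k| ≤ N. For x ∈ X define V_x(n) := f(S^n x). Then for all x, y ∈ X, any bounded linear operators H_x and H_y on ℓ²(ℤ,ℂ) satisfying (H_x ψ)(n) = ψ(n+1) + ψ(n−1) + V_x(n)ψ(n) and (H_y ψ)(n) = ψ(n+1) + ψ(n−1) + V_y(n)ψ(n) have equal spectra: spectrum(H_x) = spectrum(H_y). -/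
/-!
A Schrödinger operator with a real potential is self-adjoint, so `z` lies outside its spectrum
exactly when `z - H` is bounded below. Such a lower bound transfers from `H_y` to `H_x`: by
minimality, the finitely many letters of `x` that determine the potential `V_x` on the support
of a finitely supported `ψ` reappear in some shift `S^m y`, so on that support `V_x` is a
translate of `V_y`, and translating `ψ` by `m` (a unitary) intertwines the two operators.
Finitely supported vectors are dense, so the bound holds on all of `ℓ²`; by symmetry the
spectra coincide.
-/

open scoped ComplexConjugate ENNReal NNReal

/-- The shift of a two-sided sequence by `m` (that is, `S^m`). -/
def shiftBy {A : Type*} (m : ℤ) (x : ℤ → A) : ℤ → A := fun n => x (n + m)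

local notation "ℓ²(ℤ)" => lp (fun _ : ℤ => ℂ) 2

theorem IsSelfAdjoint.isStarNormal_algebraMap_sub {R A : Type*} [CommSemiring R] [StarRing R]
    [Ring A] [StarRing A] [Algebra R A] [StarModule R A] {a : A} (ha : IsSelfAdjoint a) (r : R) :
    IsStarNormal (algebraMap R A r - a) := by
  refine ⟨?_⟩
  rw [star_sub, ha.star_eq, ← algebraMap_star_comm]
  exact (Algebra.commute_algebraMap_left _ _).sub_left
    ((Algebra.commute_algebraMap_left r a).symm.sub_right (Commute.refl a))

/-- For a normal `T`, `(range T)ᗮ = ker T`, so a lower bound already forces a dense range. -/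
theorem ContinuousLinearMap.isUnit_iff_exists_antilipschitzWith {E : Type*}
    [NormedAddCommGroup E] [InnerProductSpace ℂ E] [CompleteSpace E] {T : E →L[ℂ] E}
    [IsStarNormal T] : IsUnit T ↔ ∃ K, AntilipschitzWith K T := by
  rw [isUnit_iff_bijective, bijective_iff_dense_range_and_antilipschitz,
    Submodule.topologicalClosure_eq_top_iff, IsStarNormal.orthogonal_range ‹_›]
  exact and_iff_right_of_imp fun ⟨_, hK⟩ => LinearMap.ker_eq_bot.mpr hK.injective

theorem lp.mem_of_isClosed_of_finite_support {α : Type*} {E : α → Type*}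
    [∀ i, NormedAddCommGroup (E i)] {p : ℝ≥0∞} [Fact (1 ≤ p)] (hp : p ≠ ⊤)
    {S : Set (lp E p)} (hS : IsClosed S)
    (h : ∀ (s : Finset α) (f : lp E p), (∀ i ∉ s, f i = 0) → f ∈ S) (f : lp E p) : f ∈ S := by
  classical
  refine hS.mem_of_tendsto (lp.hasSum_single hp f) (Filter.Eventually.of_forall fun s => h s _ ?_)
  intro i hi
  rw [lp.coeFn_sum, Finset.sum_apply]
  exact Finset.sum_eq_zero fun j hj => lp.single_apply_ne p j _ (ne_of_mem_of_not_mem hj hi).symm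

def lpTranslate (m : ℤ) : ℓ²(ℤ) →ₗᵢ[ℂ] ℓ²(ℤ) where
  toFun ψ := ⟨fun n => ψ (n + m), by
    have hψ := lp.memℓp ψ
    show Memℓp _ 2
    rw [memℓp_gen_iff (by norm_num)] at hψ ⊢
    exact (Equiv.addRight m).summable_iff.mpr hψ⟩
  map_add' _ _ := rfl
  map_smul' _ _ := rfl
  norm_map' ψ := by
    rw [lp.norm_eq_tsum_rpow (by norm_num), lp.norm_eq_tsum_rpow (by norm_num)]
    congr 1
    exact (Equiv.addRight m).tsum_eq (fun n => ‖ψ n‖ ^ (2 : ℝ≥0∞).toReal)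

@[simp]
theorem lpTranslate_apply (m : ℤ) (ψ : ℓ²(ℤ)) (n : ℤ) : lpTranslate m ψ n = ψ (n + m) := rfl

def IsSchrodingerOperator (V : ℤ → ℝ) (H : ℓ²(ℤ) →L[ℂ] ℓ²(ℤ)) : Prop :=
  ∀ ψ : ℓ²(ℤ), ∀ n : ℤ, (H ψ : ℤ → ℂ) n = ψ (n + 1) + ψ (n - 1) + (V n : ℂ) * ψ n

def PatternsOccurIn (V W : ℤ → ℝ) : Prop :=
  ∀ s : Finset ℤ, ∃ m : ℤ, ∀ n ∈ s, V n = W (n + m)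

namespace IsSchrodingerOperator

variable {V W : ℤ → ℝ} {H H' : ℓ²(ℤ) →L[ℂ] ℓ²(ℤ)}

theorem conj_apply_single (hH : IsSchrodingerOperator V H) (i j : ℤ) :
    conj ((H (lp.single 2 i 1) : ℤ → ℂ) j) = (H (lp.single 2 j 1) : ℤ → ℂ) i := by
  simp only [hH _ i, hH _ j, lp.single_apply, Pi.single_apply, map_add, map_mul,
    Complex.conj_ofReal]
  split_ifs <;> (try subst_vars) <;> first | omega | simp

theorem isSelfAdjoint (hH : IsSchrodingerOperator V H) : IsSelfAdjoint H := by
  refine lp.ext_continuousLinearMap ENNReal.ofNat_ne_top fun i => ?_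
  refine ContinuousLinearMap.ext_ring (lp.ext (funext fun j => ?_))
  simp only [ContinuousLinearMap.comp_apply, lp.singleContinuousLinearMap_apply]
  have inner_single (k : ℤ) (f : ℓ²(ℤ)) : inner ℂ (lp.single 2 k (1 : ℂ)) f = f k := by
    simp [lp.inner_single_left]
  rw [← inner_single, ContinuousLinearMap.star_eq_adjoint, ContinuousLinearMap.adjoint_inner_right,
    ← inner_conj_symm, inner_single, hH.conj_apply_single]

theorem apply_lpTranslate (hH : IsSchrodingerOperator V H) (hH' : IsSchrodingerOperator W H')
    {ψ : ℓ²(ℤ)} {m : ℤ} (hVW : ∀ n, ψ n ≠ 0 → V n = W (n + m)) :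
    H' (lpTranslate (-m) ψ) = lpTranslate (-m) (H ψ) := by
  ext k
  have hpot : (W k : ℂ) * ψ (k + -m) = V (k + -m) * ψ (k + -m) := by
    by_cases hψ : ψ (k + -m) = 0
    · simp [hψ]
    · rw [hVW _ hψ, neg_add_cancel_right]
  simp only [hH' _ k, lpTranslate_apply, hH _ (k + -m), ← hpot]
  ring_nf

theorem antilipschitzWith_of_patternsOccurIn (hH : IsSchrodingerOperator V H)
    (hH' : IsSchrodingerOperator W H') (hVW : PatternsOccurIn V W) (z : ℂ) {K : ℝ≥0}
    (hK : AntilipschitzWith K (algebraMap ℂ (ℓ²(ℤ) →L[ℂ] ℓ²(ℤ)) z - H')) :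
    AntilipschitzWith K (algebraMap ℂ (ℓ²(ℤ) →L[ℂ] ℓ²(ℤ)) z - H) := by
  refine ContinuousLinearMap.antilipschitz_of_bound _ fun ψ => ?_
  have hclosed :
      IsClosed {ψ : ℓ²(ℤ) | ‖ψ‖ ≤ K * ‖(algebraMap ℂ (ℓ²(ℤ) →L[ℂ] ℓ²(ℤ)) z - H) ψ‖} :=
    isClosed_le continuous_norm (continuous_const.mul (map_continuous _).norm)
  refine lp.mem_of_isClosed_of_finite_support ENNReal.ofNat_ne_top hclosed (fun s ψ hψ => ?_) ψ
  obtain ⟨m, hm⟩ := hVW s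
  have hcomm := hH.apply_lpTranslate hH' (m := m) fun n hn => hm n (by_contra fun h => hn (hψ n h))
  calc ‖ψ‖ = ‖lpTranslate (-m) ψ‖ := ((lpTranslate (-m)).norm_map ψ).symm
    _ ≤ K * ‖(algebraMap ℂ (ℓ²(ℤ) →L[ℂ] ℓ²(ℤ)) z - H') (lpTranslate (-m) ψ)‖ :=
      ContinuousLinearMap.bound_of_antilipschitz _ hK _
    _ = K * ‖(algebraMap ℂ (ℓ²(ℤ) →L[ℂ] ℓ²(ℤ)) z - H) ψ‖ := by
      simp only [sub_apply, hcomm, Algebra.algebraMap_eq_smul_one, smul_apply, one_apply_eq_self,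
        ← map_smul, ← map_sub, LinearIsometry.norm_map]

theorem spectrum_subset_of_patternsOccurIn (hH : IsSchrodingerOperator V H)
    (hH' : IsSchrodingerOperator W H') (hVW : PatternsOccurIn V W) :
    spectrum ℂ H ⊆ spectrum ℂ H' := by
  intro z
  contrapose
  have := hH.isSelfAdjoint.isStarNormal_algebraMap_sub z
  have := hH'.isSelfAdjoint.isStarNormal_algebraMap_sub z
  rw [spectrum.notMem_iff, spectrum.notMem_iff,
    ContinuousLinearMap.isUnit_iff_exists_antilipschitzWith,
    ContinuousLinearMap.isUnit_iff_exists_antilipschitzWith]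
  exact fun ⟨K, hK⟩ => ⟨K, hH.antilipschitzWith_of_patternsOccurIn hH' hVW z hK⟩

end IsSchrodingerOperator

theorem exists_eqOn_of_mem_closure {ι A : Type*} [TopologicalSpace A] [DiscreteTopology A]
    {S : Set (ι → A)} {x : ι → A} (hx : x ∈ closure S) (s : Finset ι) :
    ∃ z ∈ S, ∀ i ∈ s, z i = x i := by
  have hU : IsOpen ((s : Set ι).pi fun i => {x i}) :=
    isOpen_set_pi s.finite_toSet fun _ _ => isOpen_discrete _
  obtain ⟨z, hzU, hzS⟩ := mem_closure_iff.mp hx _ hU (Set.mem_pi.mpr fun _ _ => rfl)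
  exact ⟨z, hzS, fun i hi => hzU i hi⟩

open Pointwise in
theorem patternsOccurIn_of_mem_closure_orbit {A : Type*} [TopologicalSpace A]
    [DiscreteTopology A] {X : Set (ℤ → A)} (hXinv : ∀ x ∈ X, ∀ m : ℤ, shiftBy m x ∈ X)
    {f : (ℤ → A) → ℝ} {N : ℕ}
    (hf : ∀ x ∈ X, ∀ y ∈ X, (∀ k : ℤ, |k| ≤ (N : ℤ) → x k = y k) → f x = f y)
    {x y : ℤ → A} (hx : x ∈ X) (hy : y ∈ X) (hxy : x ∈ closure {z | ∃ m : ℤ, z = shiftBy m y}) :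
    PatternsOccurIn (fun n => f (shiftBy n x)) (fun n => f (shiftBy n y)) := by
  intro s
  obtain ⟨_, ⟨m, rfl⟩, hm⟩ := exists_eqOn_of_mem_closure hxy (s + Finset.Icc (-N : ℤ) N)
  refine ⟨m, fun n hn => hf _ (hXinv x hx n) _ (hXinv y hy (n + m)) fun k hk => ?_⟩
  have hwindow := hm (n + k) (Finset.add_mem_add hn (Finset.mem_Icc.mpr (abs_le.mp hk)))
  simp only [shiftBy] at hwindow ⊢
  rw [add_comm k, ← hwindow, add_assoc, add_left_comm]

theorem stmt16_general {A : Type*} [TopologicalSpace A] [DiscreteTopology A]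
    (X : Set (ℤ → A))
    (hXinv : ∀ x ∈ X, ∀ m : ℤ, shiftBy m x ∈ X)
    (hmin : ∀ x ∈ X, closure {y | ∃ m : ℤ, y = shiftBy m x} = X)
    (f : (ℤ → A) → ℝ)
    (hf : ∃ N : ℕ, ∀ x ∈ X, ∀ y ∈ X,
      (∀ k : ℤ, |k| ≤ (N : ℤ) → x k = y k) → f x = f y)
    (x y : ℤ → A) (hx : x ∈ X) (hy : y ∈ X)
    (Hx Hy : lp (fun _ : ℤ => ℂ) 2 →L[ℂ] lp (fun _ : ℤ => ℂ) 2)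
    (hHx : ∀ ψ : lp (fun _ : ℤ => ℂ) 2, ∀ n : ℤ,
      (Hx ψ : ∀ _ : ℤ, ℂ) n =
        (ψ : ∀ _ : ℤ, ℂ) (n + 1) + (ψ : ∀ _ : ℤ, ℂ) (n - 1) +
          (f (shiftBy n x) : ℂ) * (ψ : ∀ _ : ℤ, ℂ) n)
    (hHy : ∀ ψ : lp (fun _ : ℤ => ℂ) 2, ∀ n : ℤ,
      (Hy ψ : ∀ _ : ℤ, ℂ) n =
        (ψ : ∀ _ : ℤ, ℂ) (n + 1) + (ψ : ∀ _ : ℤ, ℂ) (n - 1) +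
          (f (shiftBy n y) : ℂ) * (ψ : ∀ _ : ℤ, ℂ) n) :
    spectrum ℂ Hx = spectrum ℂ Hy := by
  obtain ⟨N, hf⟩ := hf
  have hxy : x ∈ closure {z | ∃ m : ℤ, z = shiftBy m y} := hmin y hy ▸ hx
  have hyx : y ∈ closure {z | ∃ m : ℤ, z = shiftBy m x} := hmin x hx ▸ hy
  exact (IsSchrodingerOperator.spectrum_subset_of_patternsOccurIn hHx hHy
    (patternsOccurIn_of_mem_closure_orbit hXinv hf hx hy hxy)).antisymm
    (IsSchrodingerOperator.spectrum_subset_of_patternsOccurIn hHy hHx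
      (patternsOccurIn_of_mem_closure_orbit hXinv hf hy hx hyx))

/-- on a minimal subshift, the Schrödinger operators generated by a
locally constant sampling function have `x`-independent spectrum. -/
theorem stmt16 {A : Type*} [Fintype A] [TopologicalSpace A] [DiscreteTopology A]
    (X : Set (ℤ → A)) (hXne : X.Nonempty) (hXclosed : IsClosed X)
    (hXinv : ∀ x ∈ X, ∀ m : ℤ, shiftBy m x ∈ X)
    (hmin : ∀ x ∈ X, closure {y | ∃ m : ℤ, y = shiftBy m x} = X)
    (f : (ℤ → A) → ℝ)
    (hf : ∃ N : ℕ, ∀ x ∈ X, ∀ y ∈ X,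
      (∀ k : ℤ, |k| ≤ (N : ℤ) → x k = y k) → f x = f y)
    (x y : ℤ → A) (hx : x ∈ X) (hy : y ∈ X)
    (Hx Hy : lp (fun _ : ℤ => ℂ) 2 →L[ℂ] lp (fun _ : ℤ => ℂ) 2)
    (hHx : ∀ ψ : lp (fun _ : ℤ => ℂ) 2, ∀ n : ℤ,
      (Hx ψ : ∀ _ : ℤ, ℂ) n =
        (ψ : ∀ _ : ℤ, ℂ) (n + 1) + (ψ : ∀ _ : ℤ, ℂ) (n - 1) +
          (f (shiftBy n x) : ℂ) * (ψ : ∀ _ : ℤ, ℂ) n)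
    (hHy : ∀ ψ : lp (fun _ : ℤ => ℂ) 2, ∀ n : ℤ,
      (Hy ψ : ∀ _ : ℤ, ℂ) n =
        (ψ : ∀ _ : ℤ, ℂ) (n + 1) + (ψ : ∀ _ : ℤ, ℂ) (n - 1) +
          (f (shiftBy n y) : ℂ) * (ψ : ∀ _ : ℤ, ℂ) n) :
    spectrum ℂ Hx = spectrum ℂ Hy :=
  stmt16_general X hXinv hmin f hf x y hx hy Hx Hy hHx hHy
end
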